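/- arXiv:2103.15247 — 3 statements merged into one kernel-verified Lean document; each statement's English description precedes it below -/
import Mathlib

section
/- If the deformed Cartan matrix C = (σ_{ij} - σ_{ij}^{-1})_{i,j∈I} is non-degenerate (over the field of rational functions in the parameters), then the shifted affine roots {A_{j,σ} : j ∈ I, σ a monomial} are algebraically independent elements of the Laurent ring in the variables Y_{i,τ}. -/
/-! Statement 2: if the deformed Cartan matrix `C = (σ_{ij} - σ_{ij}^{-1})` is non-degenerate,
then the shifted affine roots `A_{j,σ}` are algebraically independent.

The ring `R` of Laurent polynomials in `q, q₁, q₂, …` is modelled as the group algebra of the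
free abelian group `LMon = ℕ →₀ ℤ` of monomials (the generator `0` corresponds to `q`).
The Laurent ring `𝒴` in the variables `Y_{i,σ}` is the group algebra of the free abelian
group of exponent vectors `(I × LMon) →₀ ℤ`. -/

/-- Monomials `q^a ∏ q_i^{a_i}` as exponent vectors. -/
abbrev LMon : Type := ℕ →₀ ℤ

/-- The Laurent ring `R` in `q, q₁, q₂, …`. -/
abbrev LRing : Type := AddMonoidAlgebra ℤ LMon

/-- A monomial of `R` as an element of `R`. -/
noncomputable def eR (g : LMon) : LRing := AddMonoidAlgebra.single g 1

/-- The monomial `q`. -/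
noncomputable def qMon : LMon := Finsupp.single 0 1

/-- Exponent vectors of monomials in the variables `Y_{i,σ}`. -/
abbrev YMon (I : Type*) : Type _ := (I × LMon) →₀ ℤ

/-- The Laurent ring `𝒴` in the variables `Y_{i,σ}`. -/
abbrev YRing (I : Type*) : Type _ := AddMonoidAlgebra ℤ (YMon I)

/-- The shifted affine root `A_{j,σ} = Π_i Y_{i,σ_{ij}σ} Y_{i,σ_{ij}^{-1}σ}^{-1}`
(as an exponent vector). -/
noncomputable def affRoot {I : Type*} [Fintype I] (σm : I → I → LMon) (j : I) (σ : LMon) :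
    YMon I :=
  ∑ i : I, (Finsupp.single (i, σm i j + σ) (1 : ℤ) - Finsupp.single (i, -σm i j + σ) 1)

/-! Collecting the variables `Y_{i,τ}` by `i` identifies the exponent lattice of `𝒴` with the
free `R`-module `R^I` (`Y_{i,τ} ↦ τ eᵢ`), and under this identification the exponent vector of
`A_{j,σ}` is `C (σ eⱼ)`. Since `R` is a domain and `det C ≠ 0`, `C` is injective, so the exponent
vectors of the `A_{j,σ}` are `ℤ`-linearly independent. Monomials with linearly independent
exponents are algebraically independent: distinct monomials in them are distinct monomials of
the Laurent ring. -/

namespace AddMonoidAlgebra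

theorem aeval_single_eq_mapDomainAlgHom {R G ι : Type*} [CommSemiring R] [AddCommMonoid G]
    (g : ι → G) :
    MvPolynomial.aeval (fun i => (single (g i) 1 : AddMonoidAlgebra R G)) =
      (mapDomainAlgHom R R (Finsupp.linearCombination ℕ g).toAddMonoidHom :
        MvPolynomial ι R →ₐ[R] AddMonoidAlgebra R G) := by
  apply MvPolynomial.algHom_ext
  intro i
  rw [MvPolynomial.aeval_X]
  exact (mapDomain_single.trans (by simp)).symm

theorem algebraicIndependent_single {R G ι : Type*} [CommRing R] [AddCommGroup G]
    {g : ι → G} (hg : LinearIndependent ℤ g) :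
    AlgebraicIndependent R (fun i => (single (g i) 1 : AddMonoidAlgebra R G)) := by
  rw [algebraicIndependent_iff_injective_aeval, aeval_single_eq_mapDomainAlgHom]
  exact mapDomain_injective (hg.restrict_scalars' ℕ)

end AddMonoidAlgebra

open Matrix

noncomputable def yMonEquiv (I : Type*) [Finite I] : YMon I ≃ₗ[ℤ] (I → LRing) :=
  (Finsupp.curryLinearEquiv ℤ).trans <|
    (Finsupp.mapRange.linearEquiv (AddMonoidAlgebra.coeffLinearEquiv ℤ).symm).trans
      (Finsupp.linearEquivFunOnFinite ℤ LRing I)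

theorem yMonEquiv_single {I : Type*} [Finite I] [DecidableEq I] (k : I) (τ : LMon) :
    yMonEquiv I (Finsupp.single (k, τ) 1) = Pi.single k (eR τ) := by
  funext i
  rcases eq_or_ne i k with rfl | h
  · simp [yMonEquiv, eR, Finsupp.curryLinearEquiv]
  · simp [yMonEquiv, eR, Finsupp.curryLinearEquiv, h]

noncomputable def deformedCartan {I : Type*} (σm : I → I → LMon) : Matrix I I LRing :=
  Matrix.of fun i j => eR (σm i j) - eR (-σm i j)

theorem yMonEquiv_affRoot {I : Type*} [Fintype I] [DecidableEq I] (σm : I → I → LMon) (j : I)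
    (σ : LMon) :
    yMonEquiv I (affRoot σm j σ) = deformedCartan σm *ᵥ Pi.single j (eR σ) := by
  rw [Matrix.mulVec_single]
  funext i
  simp [affRoot, yMonEquiv_single, deformedCartan, Finset.sum_apply, Pi.single_apply, sub_mul, eR,
    AddMonoidAlgebra.single_mul_single]

theorem linearIndependent_affRoot {I : Type*} [Fintype I] [DecidableEq I] (σm : I → I → LMon)
    (hC : (deformedCartan σm).det ≠ 0) :
    LinearIndependent ℤ (fun p : I × LMon => affRoot σm p.1 p.2) := by
  have hconj : (yMonEquiv I).toLinearMap ∘ₗ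
        Finsupp.linearCombination ℤ (fun p : I × LMon => affRoot σm p.1 p.2) =
      (deformedCartan σm).mulVecLin.restrictScalars ℤ ∘ₗ (yMonEquiv I).toLinearMap := by
    ext ⟨j, σ⟩ : 2
    simp [yMonEquiv_affRoot, yMonEquiv_single]
  have hinj : Function.Injective
      ((deformedCartan σm).mulVecLin.restrictScalars ℤ ∘ₗ (yMonEquiv I).toLinearMap) :=
    (Matrix.mulVec_injective_of_det_ne_zero hC).comp (yMonEquiv I).injective
  rw [← hconj, LinearMap.coe_comp] at hinj
  exact hinj.of_comp

theorem statement2_general {I : Type*} [Fintype I] [DecidableEq I]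
    (σm : I → I → LMon)
    (hC : (Matrix.of fun i j : I => eR (σm i j) - eR (-σm i j)).det ≠ 0) :
    AlgebraicIndependent ℤ
      (fun p : I × LMon =>
        (AddMonoidAlgebra.single (affRoot σm p.1 p.2) 1 : YRing I)) :=
  AddMonoidAlgebra.algebraicIndependent_single (linearIndependent_affRoot σm hC)

/-- If the deformed Cartan matrix of fermionic type is non-degenerate then the shifted
affine roots `A_{j,σ}`, `j ∈ I`, `σ` a monomial, are algebraically independent. -/
theorem statement2 {I : Type*} [Fintype I] [DecidableEq I]
    (σm : I → I → LMon)
    (hsym : ∀ i j, σm i j = σm j i) (hdiag : ∀ i, σm i i = qMon)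
    (hC : (Matrix.of fun i j : I => eR (σm i j) - eR (-σm i j)).det ≠ 0) :
    AlgebraicIndependent ℤ
      (fun p : I × LMon =>
        (AddMonoidAlgebra.single (affRoot σm p.1 p.2) 1 : YRing I)) :=
  statement2_general σm hC
end

section
/- For the gl_{2,1} deformed Cartan matrix, the infinite sum χ₁⁺ = Σ_{i≥0} (Y_{1,qp^{-i}} Y_{2,q₁p^{-i}} Y_{2,q₁}^{-1} + Y_{1,q^{-1}p^{-i}} Y_{2,q₁^{-1}p^{-i}} Y_{2,q₁}^{-1}) satisfies: denoting its monomials V_0, V_1, V_2, ... in the listed order (alternating the two summand types with increasing i), one has V_{2i+1} = A_{1,p^{-i}}^{-1} V_{2i} and V_{2i+2} = A_{2,q₂p^{-i}}^{-1} V_{2i+1} for all i ≥ 0. -/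
/-! Statement 8: the monomials of the gl_{2,1} qq-character
`χ₁⁺ = Σ_{i≥0} (Y_{1,qp^{-i}} Y_{2,q₁p^{-i}} Y_{2,q₁}^{-1} + Y_{1,q^{-1}p^{-i}} Y_{2,q₁^{-1}p^{-i}} Y_{2,q₁}^{-1})`
are connected by affine roots: `V_{2i+1} = A_{1,p^{-i}}^{-1} V_{2i}` and
`V_{2i+2} = A_{2,q₂p^{-i}}^{-1} V_{2i+1}`.

Monomials in `q, q₁` are modelled by their exponent pairs in `Γ = ℤ × ℤ`
(`q ↦ (1,0)`, `q₁ ↦ (0,1)`, so `q₂ = q⁻¹q₁⁻¹ ↦ (-1,-1)`, `p = q²q₁² ↦ (2,2)`).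
Monomials in the `Y_{i,σ}` (colors `i ∈ {1,2}`, indexed by `Fin 2`) are exponent vectors. -/

namespace Stmt8

abbrev Γ : Type := ℤ × ℤ
abbrev G : Type := (Fin 2 × Γ) →₀ ℤ

def qe : Γ := (1, 0)
def q1e : Γ := (0, 1)
def q2e : Γ := (-1, -1)
def pe : Γ := (2, 2)

/-- The variable `Y_{i,σ}`. -/
noncomputable def Yv (i : Fin 2) (g : Γ) : G := Finsupp.single (i, g) 1

/-- `A_{1,σ} = Y_{1,qσ}Y_{1,q⁻¹σ}⁻¹ Y_{2,q₁σ}Y_{2,q₁⁻¹σ}⁻¹`. -/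
noncomputable def A1 (σ : Γ) : G :=
  Yv 0 (qe + σ) - Yv 0 (-qe + σ) + Yv 1 (q1e + σ) - Yv 1 (-q1e + σ)

/-- `A_{2,σ} = Y_{1,q₁σ}Y_{1,q₁⁻¹σ}⁻¹ Y_{2,qσ}Y_{2,q⁻¹σ}⁻¹`. -/
noncomputable def A2 (σ : Γ) : G :=
  Yv 0 (q1e + σ) - Yv 0 (-q1e + σ) + Yv 1 (qe + σ) - Yv 1 (-qe + σ)

/-- `V_{2i} = Y_{1,qp^{-i}} Y_{2,q₁p^{-i}} Y_{2,q₁}^{-1}`. -/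
noncomputable def Ve (i : ℕ) : G := Yv 0 (qe - i • pe) + Yv 1 (q1e - i • pe) - Yv 1 q1e

/-- `V_{2i+1} = Y_{1,q^{-1}p^{-i}} Y_{2,q₁^{-1}p^{-i}} Y_{2,q₁}^{-1}`. -/
noncomputable def Vo (i : ℕ) : G := Yv 0 (-qe - i • pe) + Yv 1 (-q1e - i • pe) - Yv 1 q1e

/-- The monomials `V_0, V_1, V_2, …` of `χ₁⁺` in the listed order. -/
noncomputable def V (n : ℕ) : G := if n % 2 = 0 then Ve (n / 2) else Vo (n / 2)

theorem V_two_mul (i : ℕ) : V (2 * i) = Ve i := by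
  simp [V]

theorem V_two_mul_add_one (i : ℕ) : V (2 * i + 1) = Vo i := by
  simp [V, Nat.add_mod, Nat.add_div]

theorem V_two_mul_add_two (i : ℕ) : V (2 * i + 2) = Ve (i + 1) := by
  rw [show 2 * i + 2 = 2 * (i + 1) by ring, V_two_mul]

theorem sub_A1 (σ : Γ) :
    Yv 0 (qe + σ) + Yv 1 (q1e + σ) - A1 σ = Yv 0 (-qe + σ) + Yv 1 (-q1e + σ) := by
  rw [A1]; abel

theorem sub_A2 (σ : Γ) :
    Yv 0 (q1e + σ) + Yv 1 (qe + σ) - A2 σ = Yv 0 (-q1e + σ) + Yv 1 (-qe + σ) := by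
  rw [A2]; abel

theorem q1e_add_q2e : q1e + q2e = -qe := rfl

theorem qe_add_q2e : qe + q2e = -q1e := rfl

theorem neg_q1e_add_q2e : -q1e + q2e = qe - pe := rfl

theorem neg_qe_add_q2e : -qe + q2e = q1e - pe := rfl

theorem Ve_sub_A1 (i : ℕ) : Ve i - A1 (-(i • pe)) = Vo i := by
  have h := sub_A1 (-(i • pe))
  simp only [← sub_eq_add_neg] at h
  rw [Ve, Vo, ← h]
  abel

-- `q₂ = q⁻¹q₁⁻¹` turns the shifts `q₁q₂, qq₂, q₁⁻¹q₂, q⁻¹q₂` of `A_{2,q₂p^{-i}}` into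
-- `q⁻¹, q₁⁻¹, qp⁻¹, q₁p⁻¹`, the shifts of `V_{2i+1}` and `V_{2i+2}`.
theorem Vo_sub_A2 (i : ℕ) : Vo i - A2 (q2e - i • pe) = Ve (i + 1) := by
  have h := sub_A2 (q2e - i • pe)
  simp only [← add_sub_assoc, q1e_add_q2e, qe_add_q2e, neg_q1e_add_q2e, neg_qe_add_q2e,
    sub_sub, ← succ_nsmul'] at h
  rw [Vo, Ve, ← h]
  abel

theorem statement8 :
    ∀ i : ℕ,
      V (2 * i + 1) = V (2 * i) - A1 (-(i • pe)) ∧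
      V (2 * i + 2) = V (2 * i + 1) - A2 (q2e - i • pe) := by
  intro i
  rw [V_two_mul, V_two_mul_add_one, V_two_mul_add_two, Ve_sub_A1, Vo_sub_A2]
  exact ⟨rfl, rfl⟩

end Stmt8
end

section
/- For the D̂(2,1;α) data, the sum χ_R = Σ_{i∈ℤ} (R⁺_{1,p^i} + R⁻_{1,p^i}), where R₁^± = Y_{0,q₃^{±1}}^{-1} Y_{1,q₂^{±1}}^{-1} Y_{2,q₁^{∓1}} Y_{3,q₀^{∓1}}, is a qq-character of degree (-1,-1,1,1): each monomial R⁻_{1,p^i} is connected to R⁺_{1,p^i} by an affine root of color 2 or 3 and the degrees deg_j of all monomials equal (-1,-1,1,1) for j=(0,1,2,3). -/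
/-! Statement 14: for the D̂(2,1;α) data, `χ_R = Σ_{i∈ℤ}(R⁺_{1,p^i} + R⁻_{1,p^i})` is a
qq-character of degree `(-1,-1,1,1)`: each monomial `R⁻_{1,p^i}` is connected to
`R⁺_{1,p^i}` by an affine root of color 2 or 3, and all monomials have degree `(-1,-1,1,1)`.

The group `Γ` of monomials in `q₀, q₁, q₂` is written additively; `q₃ = (q₀q₁q₂)⁻¹`.
Colors `0,1,2,3` are indexed by `Fin 4`; monomials in the `Y_{i,σ}` are exponent vectors. -/

namespace Stmt14

abbrev G (Γ : Type*) : Type _ := (Fin 4 × Γ) →₀ ℤ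

variable {Γ : Type*} [AddCommGroup Γ]

noncomputable def Yv (i : Fin 4) (g : Γ) : G Γ := Finsupp.single (i, g) 1

def q3 (q0 q1 q2 : Γ) : Γ := -q0 - q1 - q2

/-- The entries `σ_{ij}` of the D̂(2,1;α) deformed Cartan matrix. -/
noncomputable def σD (q0 q1 q2 : Γ) : Fin 4 → Fin 4 → Γ :=
  fun i j =>
    !![q0, q1, q2, q3 q0 q1 q2;
       q1, q0, q3 q0 q1 q2, q2;
       q2, q3 q0 q1 q2, q0, q1;
       q3 q0 q1 q2, q2, q1, q0] i j

/-- The shifted affine root `A_{c,τ} = Π_i Y_{i,σ_{ic}τ}Y_{i,σ_{ic}^{-1}τ}^{-1}`. -/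
noncomputable def A (q0 q1 q2 : Γ) (c : Fin 4) (τ : Γ) : G Γ :=
  ∑ i : Fin 4, (Yv i (σD q0 q1 q2 i c + τ) - Yv i (-σD q0 q1 q2 i c + τ))

/-- `R₁⁺ = Y_{0,q₃}^{-1} Y_{1,q₂}^{-1} Y_{2,q₁^{-1}} Y_{3,q₀^{-1}}`, shifted by `σ`. -/
noncomputable def Rp (q0 q1 q2 σ : Γ) : G Γ :=
  -Yv 0 (q3 q0 q1 q2 + σ) - Yv 1 (q2 + σ) + Yv 2 (-q1 + σ) + Yv 3 (-q0 + σ)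

/-- `R₁⁻ = Y_{0,q₃^{-1}}^{-1} Y_{1,q₂^{-1}}^{-1} Y_{2,q₁} Y_{3,q₀}`, shifted by `σ`. -/
noncomputable def Rm (q0 q1 q2 σ : Γ) : G Γ :=
  -Yv 0 (-q3 q0 q1 q2 + σ) - Yv 1 (-q2 + σ) + Yv 2 (q1 + σ) + Yv 3 (q0 + σ)

/-- The degree `deg_j` of a monomial (exponent sum of the color-`j` variables). -/
noncomputable def degc (j : Fin 4) (m : G Γ) : ℤ :=
  m.sum fun p c => if p.1 = j then c else 0

lemma degc_eq_liftAddHom {Γ : Type*} (j : Fin 4) (m : G Γ) :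
    degc j m =
      Finsupp.liftAddHom (fun p : Fin 4 × Γ => if p.1 = j then AddMonoidHom.id ℤ else 0) m := by
  rw [degc, Finsupp.liftAddHom_apply]
  congr 1; ext p c; split <;> simp_all

lemma degc_add {Γ : Type*} (j : Fin 4) (a b : G Γ) : degc j (a + b) = degc j a + degc j b := by
  simp only [degc_eq_liftAddHom, map_add]

lemma degc_neg {Γ : Type*} (j : Fin 4) (a : G Γ) : degc j (-a) = -degc j a := by
  simp only [degc_eq_liftAddHom, map_neg]

lemma degc_sub {Γ : Type*} (j : Fin 4) (a b : G Γ) : degc j (a - b) = degc j a - degc j b := by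
  simp only [degc_eq_liftAddHom, map_sub]

lemma degc_Yv {Γ : Type*} (j i : Fin 4) (g : Γ) : degc j (Yv i g) = if i = j then 1 else 0 := by
  rw [Yv, degc_eq_liftAddHom, Finsupp.liftAddHom_apply_single]
  split <;> simp_all

lemma degc_Rp (q0 q1 q2 σ : Γ) (j : Fin 4) : degc j (Rp q0 q1 q2 σ) = ![-1, -1, 1, 1] j := by
  fin_cases j <;> simp [Rp, degc_add, degc_sub, degc_neg, degc_Yv]

lemma degc_Rm (q0 q1 q2 σ : Γ) (j : Fin 4) : degc j (Rm q0 q1 q2 σ) = ![-1, -1, 1, 1] j := by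
  fin_cases j <;> simp [Rm, degc_add, degc_sub, degc_neg, degc_Yv]

lemma Rp_eq_Rm_sub_A_three (q0 q1 q2 σ : Γ) :
    Rp q0 q1 q2 σ = Rm q0 q1 q2 σ - A q0 q1 q2 3 σ := by
  obtain ⟨h0, h1, h2, h3⟩ : σD q0 q1 q2 0 3 = q3 q0 q1 q2 ∧ σD q0 q1 q2 1 3 = q2 ∧
      σD q0 q1 q2 2 3 = q1 ∧ σD q0 q1 q2 3 3 = q0 := ⟨rfl, rfl, rfl, rfl⟩
  rw [Rp, Rm, A, Fin.sum_univ_four, h0, h1, h2, h3]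
  abel

theorem statement14 (q0 q1 q2 p : Γ) :
    (∀ i : ℤ, ∀ m ∈ ({Rp q0 q1 q2 (i • p), Rm q0 q1 q2 (i • p)} : Set (G Γ)),
      degc 0 m = -1 ∧ degc 1 m = -1 ∧ degc 2 m = 1 ∧ degc 3 m = 1) ∧
    (∀ i : ℤ, ∃ c : Fin 4, ∃ τ : Γ, (c = 2 ∨ c = 3) ∧
      Rp q0 q1 q2 (i • p) = Rm q0 q1 q2 (i • p) - A q0 q1 q2 c τ) := by
  refine ⟨?_, fun i => ⟨3, i • p, Or.inr rfl, Rp_eq_Rm_sub_A_three q0 q1 q2 (i • p)⟩⟩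
  rintro i m (rfl | rfl) <;> simp [degc_Rp, degc_Rm]

end Stmt14
end
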